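/- arXiv:1402.4322 — 6 statements merged into one kernel-verified Lean document; each statement's English description precedes it below -/
import Mathlib

section
/- Single linkage hierarchical clustering satisfies the richness property: for every finite set X and every ultrametric u on X, there exists a metric d on X such that the single linkage ultrametric of (X,d) equals u, i.e. u_SL = u (one may take d = u). -/
/-- `d` is a metric on `X`. -/
def IsMetric {X : Type} (d : X → X → ℝ) : Prop :=
  (∀ x y, 0 ≤ d x y) ∧ (∀ x y, d x y = 0 ↔ x = y) ∧
  (∀ x y, d x y = d y x) ∧ (∀ x y z, d x z ≤ d x y + d y z)

/-- `d` is an ultrametric on `X`. -/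
def IsUltrametric {X : Type} (d : X → X → ℝ) : Prop :=
  IsMetric d ∧ ∀ x y z, d x z ≤ max (d x y) (d y z)

/-- There is an `r`-chain from `x` to `y`: a finite chain of points each consecutive
pair at distance at most `r`. -/
def HasChain {X : Type} (d : X → X → ℝ) (r : ℝ) (x y : X) : Prop :=
  Relation.ReflTransGen (fun a b => d a b ≤ r) x y

/-- The single linkage ultrametric: the minimal `r ≥ 0` such that there is an `r`-chain
from `x` to `y` (equivalently, the min over chains of the max step). -/
noncomputable def uSL {X : Type} (d : X → X → ℝ) (x y : X) : ℝ :=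
  sInf { r : ℝ | 0 ≤ r ∧ HasChain d r x y }

/-- The separation of a metric space: the minimal distance between distinct points. -/
noncomputable def sep {X : Type} (d : X → X → ℝ) : ℝ :=
  sInf { r : ℝ | ∃ x y, x ≠ y ∧ r = d x y }

/-- A correspondence between `A` and `B`. -/
def IsCorrespondence {A B : Type} (R : Set (A × B)) : Prop :=
  (∀ a, ∃ b, (a, b) ∈ R) ∧ (∀ b, ∃ a, (a, b) ∈ R)

/-- The distortion of a correspondence. -/
noncomputable def distortion {A B : Type} (dA : A → A → ℝ) (dB : B → B → ℝ)
    (R : Set (A × B)) : ℝ :=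
  sSup { v : ℝ | ∃ p ∈ R, ∃ q ∈ R, v = |dA p.1 q.1 - dB p.2 q.2| }

/-- The Gromov–Hausdorff distance: half the infimum over correspondences of the distortion. -/
noncomputable def ghDist {A B : Type} (dA : A → A → ℝ) (dB : B → B → ℝ) : ℝ :=
  (1 / 2) * sInf { v : ℝ | ∃ R : Set (A × B), IsCorrespondence R ∧ v = distortion dA dB R }

theorem SL_richness (X : Type) [Fintype X] (u : X → X → ℝ) (hu : IsUltrametric u) :
    ∃ d : X → X → ℝ, IsMetric d ∧ ∀ x y, uSL d x y = u x y := by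
  obtain ⟨hm, hult⟩ := hu
  refine ⟨u, hm, fun x y => ?_⟩
  have hmem : u x y ∈ { r : ℝ | 0 ≤ r ∧ HasChain u r x y } :=
    ⟨hm.1 x y, Relation.ReflTransGen.single le_rfl⟩
  have hlb : ∀ r ∈ { r : ℝ | 0 ≤ r ∧ HasChain u r x y }, u x y ≤ r := by
    rintro r ⟨hr0, hc⟩
    clear hmem
    induction hc with
    | refl => rw [(hm.2.1 x x).mpr rfl]; exact hr0
    | tail _ hstep ih =>
        exact le_trans (hult _ _ _) (max_le ih hstep)
  exact le_antisymm (csInf_le ⟨u x y, fun r hr => hlb r hr⟩ hmem)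
    (le_csInf ⟨u x y, hmem⟩ hlb)
end

section
/- Let 𝔗 be a hierarchical clustering method satisfying conditions (II) and (III). Then for every finite metric space (X,d), the output ultrametric satisfies u(x,x') ≥ u_SL(x,x') for all x,x' ∈ X. -/
/-
Let `η = u_SL(x, x')` and collapse `X` along chains whose steps are all shorter than `η`. The
quotient map `φ` onto the classes, which carry the discrete metric with value `η`, does not
increase distances, and `x`, `x'` land in different classes since otherwise a chain with all
steps below `η` would join them. The separation of the quotient is `η`, so (III) and then (II)
give `η ≤ u(φ x, φ x') ≤ u(x, x')`.
-/

open Relation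

section DiscreteMetric

variable {Q : Type} [DecidableEq Q]

def discreteMetric (η : ℝ) : Q → Q → ℝ :=
  fun a b => if a = b then 0 else η

lemma isMetric_discreteMetric {η : ℝ} (hη : 0 < η) : IsMetric (discreteMetric (Q := Q) η) := by
  refine ⟨fun a b => ?_, fun a b => ?_, fun a b => ?_, fun a b c => ?_⟩ <;>
    simp only [discreteMetric]
  · split_ifs <;> linarith
  · split_ifs with h <;> simp [h, hη.ne']
  · simp only [eq_comm]
  · split_ifs <;> simp_all <;> linarith

lemma sep_discreteMetric [Nontrivial Q] (η : ℝ) : sep (discreteMetric (Q := Q) η) = η := by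
  obtain ⟨a, b, hab⟩ := exists_pair_ne Q
  have hvalues : {r : ℝ | ∃ x y : Q, x ≠ y ∧ r = discreteMetric η x y} = {η} := by
    ext r
    simp only [discreteMetric, Set.mem_ofPred_eq, Set.mem_singleton_iff]
    exact ⟨fun ⟨x, y, hxy, hr⟩ => by simpa [hxy] using hr, fun hr => ⟨a, b, hab, by simp [hab, hr]⟩⟩
  rw [sep, hvalues, csInf_singleton]

end DiscreteMetric

section ChainClasses

variable {X : Type} {d : X → X → ℝ} {η : ℝ}

lemma HasChain.mono {r s : ℝ} {x y : X} (hrs : r ≤ s) (h : HasChain d r x y) :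
    HasChain d s x y :=
  ReflTransGen.mono (fun _ _ hab => hab.trans hrs) _ _ h

lemma exists_hasChain_lt_of_reflTransGen (hη : 0 < η) {x y : X}
    (h : ReflTransGen (fun a b => d a b < η) x y) : ∃ r, 0 ≤ r ∧ r < η ∧ HasChain d r x y := by
  induction h with
  | refl => exact ⟨0, le_rfl, hη, .refl⟩
  | @tail b c _ hbc ih =>
    obtain ⟨r, hr0, hrη, hchain⟩ := ih
    exact ⟨max r (d b c), hr0.trans (le_max_left _ _), max_lt hrη hbc,
      (hchain.mono (le_max_left _ _)).tail (le_max_right _ _)⟩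

lemma uSL_le {r : ℝ} {x y : X} (hr0 : 0 ≤ r) (h : HasChain d r x y) : uSL d x y ≤ r :=
  csInf_le (s := {r | 0 ≤ r ∧ HasChain d r x y}) ⟨0, fun _ hs => hs.1⟩ ⟨hr0, h⟩

lemma uSL_lt_of_reflTransGen (hη : 0 < η) {x y : X}
    (h : ReflTransGen (fun a b => d a b < η) x y) : uSL d x y < η := by
  obtain ⟨r, hr0, hrη, hchain⟩ := exists_hasChain_lt_of_reflTransGen hη h
  exact (uSL_le hr0 hchain).trans_lt hrη

def chainSetoid (hsymm : ∀ a b, d a b = d b a) (η : ℝ) : Setoid X where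
  r := ReflTransGen (fun a b => d a b < η)
  iseqv :=
    ⟨fun _ => .refl,
      fun h => ReflTransGen.mono (fun a b hab => (hsymm a b).trans_lt hab) _ _ h.swap,
      .trans⟩

lemma discreteMetric_mk_le (hsymm : ∀ a b, d a b = d b a)
    [DecidableEq (Quotient (chainSetoid hsymm η))] (hd0 : ∀ a b, 0 ≤ d a b) (a b : X) :
    discreteMetric η (Quotient.mk (chainSetoid hsymm η) a) (Quotient.mk _ b) ≤ d a b := by
  unfold discreteMetric
  split_ifs with hab
  · exact hd0 a b
  · exact not_lt.mp fun hlt => hab (Quotient.sound (ReflTransGen.single hlt))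

end ChainClasses

theorem ge_uSL_of_II_III
    (T : (X : Type) → [Fintype X] → (X → X → ℝ) → X → X → ℝ)
    (hHC : ∀ (X : Type) [Fintype X] (d : X → X → ℝ), IsMetric d → IsUltrametric (T X d))
    (hII : ∀ (X Y : Type) [Fintype X] [Fintype Y] (dX : X → X → ℝ) (dY : Y → Y → ℝ),
      IsMetric dX → IsMetric dY → ∀ φ : X → Y,
        (∀ x x', dY (φ x) (φ x') ≤ dX x x') →
        ∀ x x', T Y dY (φ x) (φ x') ≤ T X dX x x')
    (hIII : ∀ (X : Type) [Fintype X] (d : X → X → ℝ), IsMetric d → Nontrivial X →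
      ∀ x x', x ≠ x' → sep d ≤ T X d x x')
    (X : Type) [Fintype X] (d : X → X → ℝ) (hd : IsMetric d) :
    ∀ x x', uSL d x x' ≤ T X d x x' := by
  classical
  intro x x'
  set η := uSL d x x'
  rcases le_or_gt η 0 with hη | hη
  · exact hη.trans ((hHC X d hd).1.1 x x')
  let s := chainSetoid hd.2.2.1 η
  let Q := Quotient s
  let _ : Fintype Q := Fintype.ofFinite Q
  have hdQ : IsMetric (discreteMetric (Q := Q) η) := isMetric_discreteMetric hη
  have hsplit : Quotient.mk s x ≠ Quotient.mk s x' :=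
    fun h => (uSL_lt_of_reflTransGen hη (Quotient.exact h)).false
  have : Nontrivial Q := ⟨⟨_, _, hsplit⟩⟩
  calc η = sep (discreteMetric (Q := Q) η) := (sep_discreteMetric η).symm
    _ ≤ T Q (discreteMetric η) (Quotient.mk s x) (Quotient.mk s x') :=
      hIII Q _ hdQ ‹_› _ _ hsplit
    _ ≤ T X d x x' :=
      hII X Q d _ hd hdQ (Quotient.mk s) (discreteMetric_mk_le hd.2.2.1 hd.1) x x'
end

section
/- Let 𝔗 be a hierarchical clustering method satisfying conditions (I) and (A2). Then for every finite metric space (X,d), the output ultrametric satisfies u(x,x') ≤ u_SL(x,x') for all x,x' ∈ X. -/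
theorem le_uSL_of_I_A2
    (T : (X : Type) → [Fintype X] → (X → X → ℝ) → X → X → ℝ)
    (hHC : ∀ (X : Type) [Fintype X] (d : X → X → ℝ), IsMetric d → IsUltrametric (T X d))
    (hI : ∀ (X : Type) [Fintype X] (d : X → X → ℝ), IsMetric d →
      ∀ p q : X, p ≠ q → (∀ z : X, z = p ∨ z = q) → T X d p q = d p q)
    (hA2 : ∀ (Y : Type) [Fintype Y] (dY : Y → Y → ℝ), IsMetric dY →
      ∀ (s : Set Y) (iS : Fintype ↥s) (x x' : ↥s),
        T Y dY x.1 x'.1 ≤ @T (↥s) iS (fun a b => dY a.1 b.1) x x')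
    (X : Type) [Fintype X] (d : X → X → ℝ) (hd : IsMetric d) :
    ∀ x x', T X d x x' ≤ uSL d x x' := by
  have hT := hHC X d hd
  have key : ∀ b c : X, T X d b c ≤ d b c := by
    intro b c
    by_cases hbc : b = c
    · subst hbc
      have h0 : T X d b b = 0 := (hT.1.2.1 b b).mpr rfl
      rw [h0]; exact hd.1 b b
    · set s : Set X := {b, c} with hs
      letI iS : Fintype ↥s := (Set.toFinite s).fintype
      have hbs : b ∈ s := Set.mem_insert _ _
      have hcs : c ∈ s := Set.mem_insert_of_mem _ rfl
      have hd' : IsMetric (fun a b : ↥s => d a.1 b.1) := by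
        refine ⟨fun x y => hd.1 _ _, fun x y => ?_, fun x y => hd.2.2.1 _ _,
          fun x y z => hd.2.2.2 _ _ _⟩
        rw [hd.2.1]
        exact ⟨fun h => Subtype.ext h, fun h => congrArg Subtype.val h⟩
      have htwo : ∀ z : ↥s, z = ⟨b, hbs⟩ ∨ z = ⟨c, hcs⟩ := by
        rintro ⟨z, hz⟩
        rcases hz with h | h
        · exact Or.inl (Subtype.ext h)
        · exact Or.inr (Subtype.ext h)
      have hne : (⟨b, hbs⟩ : ↥s) ≠ ⟨c, hcs⟩ := by
        intro h; exact hbc (congrArg Subtype.val h)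
      have h1 := hA2 X d hd s iS ⟨b, hbs⟩ ⟨c, hcs⟩
      have h2 := hI (↥s) (fun a b => d a.1 b.1) hd' ⟨b, hbs⟩ ⟨c, hcs⟩ hne htwo
      simpa [h2] using h1
  intro x x'
  apply le_csInf
  · exact ⟨max (d x x') 0, le_max_right _ _,
      Relation.ReflTransGen.single (le_max_left _ _)⟩
  · rintro r ⟨hr0, hchain⟩
    induction hchain with
    | refl =>
      have h0 : T X d x x = 0 := (hT.1.2.1 x x).mpr rfl
      rw [h0]; exact hr0
    | @tail b c _ hdc ih =>
      have h1 := hT.2 x b c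
      have h2 : T X d b c ≤ r := le_trans (key b c) hdc
      exact le_trans h1 (max_le ih h2)
end

section
/- (Carlsson–Mémoli characterization of single linkage.) Let 𝔗 be a hierarchical clustering method satisfying conditions (I), (II) and (III). Then 𝔗 is exactly single linkage hierarchical clustering: for every finite metric space (X,d), the output ultrametric satisfies u(x,x') = u_SL(x,x') for all x,x' ∈ X. -/
lemma twoPointMetric (δ : ℝ) (hδ : 0 < δ) :
    IsMetric (fun a b : Bool => if a = b then 0 else δ) := by
  refine ⟨?_, ?_, ?_, ?_⟩
  · intro a b; dsimp only; split_ifs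
    · exact le_refl 0
    · exact hδ.le
  · intro a b; dsimp only; split_ifs with h
    · simp [h]
    · simp [h, hδ.ne']
  · intro a b; dsimp only; by_cases h : a = b <;> simp [h, eq_comm]
  · intro a b c; cases a <;> cases b <;> cases c <;> simp <;> linarith


theorem SL_characterization
    (T : (X : Type) → [Fintype X] → (X → X → ℝ) → X → X → ℝ)
    (hHC : ∀ (X : Type) [Fintype X] (d : X → X → ℝ), IsMetric d → IsUltrametric (T X d))
    (hI : ∀ (X : Type) [Fintype X] (d : X → X → ℝ), IsMetric d →
      ∀ p q : X, p ≠ q → (∀ z : X, z = p ∨ z = q) → T X d p q = d p q)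
    (hII : ∀ (X Y : Type) [Fintype X] [Fintype Y] (dX : X → X → ℝ) (dY : Y → Y → ℝ),
      IsMetric dX → IsMetric dY → ∀ φ : X → Y,
        (∀ x x', dY (φ x) (φ x') ≤ dX x x') →
        ∀ x x', T Y dY (φ x) (φ x') ≤ T X dX x x')
    (hIII : ∀ (X : Type) [Fintype X] (d : X → X → ℝ), IsMetric d → Nontrivial X →
      ∀ x x', x ≠ x' → sep d ≤ T X d x x')
    (X : Type) [Fintype X] (d : X → X → ℝ) (hd : IsMetric d) :
    ∀ x x', T X d x x' = uSL d x x' := by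
  classical
  obtain ⟨⟨hTnn, hTeq, hTsymm, hTtri⟩, hTultra⟩ := hHC X d hd
  obtain ⟨hdnn, hdeq, hdsymm, hdtri⟩ := hd
  have hd' : IsMetric d := ⟨hdnn, hdeq, hdsymm, hdtri⟩
  -- Key: T ≤ d pointwise
  have hTd : ∀ z z' : X, T X d z z' ≤ d z z' := by
    intro z z'
    by_cases hzz : z = z'
    · subst hzz
      rw [(hTeq z z).2 rfl]
      exact hdnn z z
    · have hδpos : 0 < d z z' := by
        rcases lt_or_eq_of_le (hdnn z z') with h | h
        · exact h
        · exact absurd ((hdeq z z').1 h.symm) hzz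
      have hBmet := twoPointMetric (d z z') hδpos
      set dB : Bool → Bool → ℝ := fun a b => if a = b then 0 else d z z' with hdB
      set φ : Bool → X := fun b => if b then z else z' with hφ
      have hlip : ∀ a b : Bool, d (φ a) (φ b) ≤ dB a b := by
        intro a b
        cases a <;> cases b <;>
          simp [hφ, hdB, (hdeq z z).2 rfl, (hdeq z' z').2 rfl, hdsymm z z']
      have h1 := hII Bool X dB d hBmet hd' φ hlip true false
      have h2 := hI Bool dB hBmet true false (by simp)
        (fun b => by cases b <;> simp)
      simp only [hφ, hdB, if_true, if_false, Bool.true_eq_false] at h1 h2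
      rw [h2] at h1
      simpa using h1
  intro x x'
  apply le_antisymm
  · -- T ≤ uSL : T is a lower bound of the set
    unfold uSL
    refine le_csInf ⟨d x x', hdnn x x', Relation.ReflTransGen.single (le_refl _)⟩ ?_
    rintro r ⟨hr0, hchain⟩
    induction hchain with
    | refl => rw [(hTeq x x).2 rfl]; exact hr0
    | @tail b c _ hbc ih =>
        calc T X d x c ≤ max (T X d x b) (T X d b c) := hTultra x b c
          _ ≤ r := max_le ih ((hTd b c).trans hbc)
  · -- uSL ≤ T : T x x' belongs to the set
    unfold uSL
    apply csInf_le ⟨0, fun r hr => hr.1⟩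
    refine ⟨hTnn x x', ?_⟩
    by_contra hno
    set t := T X d x x' with ht
    set P : X → Prop := fun z => HasChain d t x z with hP
    have hPx : P x := Relation.ReflTransGen.refl
    have hPx' : ¬ P x' := hno
    set s : Finset ℝ :=
      ((Finset.univ ×ˢ Finset.univ : Finset (X × X)).filter
        (fun p => P p.1 ∧ ¬ P p.2)).image (fun p => d p.1 p.2) with hs
    have hsne : s.Nonempty := by
      refine ⟨d x x', ?_⟩
      rw [hs]
      exact Finset.mem_image.2 ⟨(x, x'),
        Finset.mem_filter.2 ⟨by simp, hPx, hPx'⟩, rfl⟩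
    set δ := s.min' hsne with hδ
    have hδle : ∀ a b : X, P a → ¬ P b → δ ≤ d a b := by
      intro a b ha hb
      apply Finset.min'_le
      rw [hs]
      exact Finset.mem_image.2 ⟨(a, b), Finset.mem_filter.2 ⟨by simp, ha, hb⟩, rfl⟩
    have hmm : δ ∈ s := s.min'_mem hsne
    rw [hs, Finset.mem_image] at hmm
    obtain ⟨⟨a₀, b₀⟩, hmem, hdef⟩ := hmm
    obtain ⟨-, hPa₀, hPb₀⟩ := Finset.mem_filter.1 hmem
    have htδ : t < δ := by
      by_contra hle
      push_neg at hle
      refine hPb₀ (hPa₀.tail ?_)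
      show d a₀ b₀ ≤ t
      rw [hdef]; exact hle
    have hδpos : 0 < δ := by
      rcases lt_or_eq_of_le (hdnn a₀ b₀) with h | h
      · exact hdef ▸ h
      · exact absurd (((hdeq a₀ b₀).1 h.symm) ▸ hPa₀) hPb₀
    have hBmet := twoPointMetric δ hδpos
    set dB : Bool → Bool → ℝ := fun a b => if a = b then 0 else δ with hdB
    set φ : X → Bool := fun z => if P z then true else false with hφ
    have hlip : ∀ z z' : X, dB (φ z) (φ z') ≤ d z z' := by
      intro z z'
      by_cases h1 : P z <;> by_cases h2 : P z' <;>
        simp only [hφ, hdB, h1, h2, if_true, if_false]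
      · simp [hdnn z z']
      · simpa using hδle z z' h1 h2
      · simpa using (hdsymm z z' ▸ hδle z' z h2 h1)
      · simp [hdnn z z']
    have h1 := hII X Bool d dB hd' hBmet φ hlip x x'
    have h2 := hI Bool dB hBmet true false (by simp)
      (fun b => by cases b <;> simp)
    simp only [hφ, hPx, hPx', if_true, if_false] at h1
    simp only [hdB, Bool.true_eq_false, if_false] at h2
    rw [h2] at h1
    exact absurd h1 (not_le.2 htδ)
end

section
/- (Alternative characterization of single linkage.) Let 𝔗 be a hierarchical clustering method satisfying conditions (A1), (A2) and (A3). Then 𝔗 is exactly single linkage hierarchical clustering: for every finite metric space (X,d), the output ultrametric satisfies u(x,x') = u_SL(x,x') for all x,x' ∈ X. -/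
theorem SL_characterization_alt
    (T : (X : Type) → [Fintype X] → (X → X → ℝ) → X → X → ℝ)
    (hHC : ∀ (X : Type) [Fintype X] (d : X → X → ℝ), IsMetric d → IsUltrametric (T X d))
    (hA1 : ∀ (X : Type) [Fintype X] (d : X → X → ℝ), IsUltrametric d →
      ∀ x y, T X d x y = d x y)
    (hA2 : ∀ (Y : Type) [Fintype Y] (dY : Y → Y → ℝ), IsMetric dY →
      ∀ (s : Set Y) (iS : Fintype ↥s) (x x' : ↥s),
        T Y dY x.1 x'.1 ≤ @T (↥s) iS (fun a b => dY a.1 b.1) x x')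
    (hA3 : ∀ (X : Type) [Fintype X] (d : X → X → ℝ), IsMetric d →
      ∀ x x', uSL d x x' ≤ T X d x x')
    (X : Type) [Fintype X] (d : X → X → ℝ) (hd : IsMetric d) :
    ∀ x x', T X d x x' = uSL d x x' := by
  intro x x'
  obtain ⟨hpos, hzero, hsymm, htri⟩ := hd
  have hd' : IsMetric d := ⟨hpos, hzero, hsymm, htri⟩
  -- Key: T on a pair is at most d, via two-point subsets
  have key : ∀ a b : X, T X d a b ≤ d a b := by
    intro a b
    set s : Set X := {a, b} with hs
    haveI iS : Fintype ↥s := (Set.toFinite s).fintype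
    have ha : a ∈ s := by simp [hs]
    have hb : b ∈ s := by simp [hs]
    have hmem : ∀ p : ↥s, p.1 = a ∨ p.1 = b := fun p => p.2
    have hult : IsUltrametric (fun p q : ↥s => d p.1 q.1) := by
      refine ⟨⟨fun p q => hpos _ _, fun p q => ?_, fun p q => hsymm _ _,
        fun p q r => htri _ _ _⟩, ?_⟩
      · rw [hzero]; exact ⟨fun h => Subtype.ext h, fun h => by rw [h]⟩
      · intro p q r
        rcases eq_or_ne q.1 p.1 with h | h
        · calc d p.1 r.1 = d q.1 r.1 := by rw [h]
            _ ≤ _ := le_max_right _ _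
        rcases eq_or_ne q.1 r.1 with h' | h'
        · calc d p.1 r.1 = d p.1 q.1 := by rw [h']
            _ ≤ _ := le_max_left _ _
        · have hpr : p.1 = r.1 := by
            rcases hmem q with hq | hq
            · rcases hmem p with hp | hp
              · exact absurd (hq.trans hp.symm) h
              · rcases hmem r with hr | hr
                · exact absurd (hq.trans hr.symm) h'
                · exact hp.trans hr.symm
            · rcases hmem p with hp | hp
              · rcases hmem r with hr | hr
                · exact hp.trans hr.symm
                · exact absurd (hq.trans hr.symm) h'
              · exact absurd (hq.trans hp.symm) h
          have : d p.1 r.1 = 0 := by rw [(hzero _ _).2 hpr]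
          show d p.1 r.1 ≤ max (d p.1 q.1) (d q.1 r.1)
          rw [this]
          exact le_max_of_le_left (hpos _ _)
    have h2 := hA2 X d hd' s iS ⟨a, ha⟩ ⟨b, hb⟩
    have h1 := hA1 (↥s) (fun p q : ↥s => d p.1 q.1) hult ⟨a, ha⟩ ⟨b, hb⟩
    calc T X d a b ≤ _ := h2
      _ = d a b := h1
  obtain ⟨⟨Tpos, Tzero, Tsymm, Ttri⟩, Tult⟩ := hHC X d hd'
  -- chain lemma
  have chain : ∀ r : ℝ, 0 ≤ r → ∀ a b : X, HasChain d r a b → T X d a b ≤ r := by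
    intro r hr a b h
    induction h with
    | refl => rw [(Tzero a a).2 rfl]; exact hr
    | tail hab hstep ih =>
      refine le_trans (Tult _ _ _) (max_le ih ?_)
      exact le_trans (key _ _) hstep
  refine le_antisymm ?_ (hA3 X d hd' x x')
  refine le_csInf ⟨d x x', hpos x x', Relation.ReflTransGen.single le_rfl⟩ ?_
  rintro r ⟨hr, hch⟩
  exact chain r hr x x' hch
end

section
/- Single linkage hierarchical clustering is stable in the Gromov–Hausdorff sense: for all nonempty finite metric spaces (X,d_X) and (Y,d_Y), the Gromov–Hausdorff distance between the output ultrametric spaces is bounded by that of the inputs, d_GH((X,u_SL^X),(Y,u_SL^Y)) ≤ d_GH((X,d_X),(Y,d_Y)). In particular the map (X,d) ↦ (X,u_SL) from finite metric spaces to finite ultrametric spaces is continuous for the Gromov–Hausdorff metric. -/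
section Aux

variable {X Y : Type}

lemma uSL_set_nonempty (d : X → X → ℝ) (hd : ∀ x y, 0 ≤ d x y) (x y : X) :
    {r : ℝ | 0 ≤ r ∧ HasChain d r x y}.Nonempty :=
  ⟨d x y, hd x y, Relation.ReflTransGen.single le_rfl⟩

lemma uSL_set_bddBelow (d : X → X → ℝ) (x y : X) :
    BddBelow {r : ℝ | 0 ≤ r ∧ HasChain d r x y} :=
  ⟨0, fun _ hr => hr.1⟩

lemma chain_lift (dX : X → X → ℝ) (dY : Y → Y → ℝ) (R : Set (X × Y))
    (hR : ∀ a, ∃ b, (a, b) ∈ R) (ε r : ℝ) (hr : 0 ≤ r)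
    (hdXX : ∀ x, dX x x = 0)
    (hε : ∀ a b a' b', (a, b) ∈ R → (a', b') ∈ R → dY b b' ≤ dX a a' + ε)
    {a a' : X} (h : HasChain dX r a a') :
    ∀ b b', (a, b) ∈ R → (a', b') ∈ R → HasChain dY (r + ε) b b' := by
  induction h with
  | refl =>
    intro b b' hb hb'
    refine Relation.ReflTransGen.single ?_
    have := hε a b a b' hb hb'
    rw [hdXX a] at this
    linarith
  | @tail m f hcm hstep ih =>
    intro b b' hb hb'
    obtain ⟨bc, hbc⟩ := hR m
    refine (ih b bc hb hbc).tail ?_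
    have := hε m bc f b' hbc hb'
    linarith

lemma uSL_le_of_corr (dX : X → X → ℝ) (dY : Y → Y → ℝ) (R : Set (X × Y))
    (hR : ∀ a, ∃ b, (a, b) ∈ R) (ε : ℝ)
    (hdXnn : ∀ x y, 0 ≤ dX x y) (hdXX : ∀ x, dX x x = 0)
    (hε : ∀ a b a' b', (a, b) ∈ R → (a', b') ∈ R → dY b b' ≤ dX a a' + ε)
    (hεnn : 0 ≤ ε)
    {a a' : X} {b b' : Y} (hb : (a, b) ∈ R) (hb' : (a', b') ∈ R) :
    uSL dY b b' ≤ uSL dX a a' + ε := by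
  have key : ∀ r ∈ {r : ℝ | 0 ≤ r ∧ HasChain dX r a a'}, uSL dY b b' - ε ≤ r := by
    intro r hr
    have hchain := chain_lift dX dY R hR ε r hr.1 hdXX hε hr.2 b b' hb hb'
    have hmem : r + ε ∈ {s : ℝ | 0 ≤ s ∧ HasChain dY s b b'} :=
      ⟨by linarith [hr.1], hchain⟩
    have := csInf_le (uSL_set_bddBelow dY b b') hmem
    unfold uSL; linarith
  have := le_csInf (uSL_set_nonempty dX hdXnn a a') key
  unfold uSL at *; linarith

lemma distortion_bddAbove_set {A B : Type} [Fintype A] [Fintype B]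
    (dA : A → A → ℝ) (dB : B → B → ℝ) (R : Set (A × B)) :
    BddAbove {v : ℝ | ∃ p ∈ R, ∃ q ∈ R, v = |dA p.1 q.1 - dB p.2 q.2|} := by
  have hsub : {v : ℝ | ∃ p ∈ R, ∃ q ∈ R, v = |dA p.1 q.1 - dB p.2 q.2|} ⊆
      Set.range (fun pq : (A × B) × (A × B) => |dA pq.1.1 pq.2.1 - dB pq.1.2 pq.2.2|) := by
    rintro v ⟨p, hp, q, hq, rfl⟩
    exact ⟨(p, q), rfl⟩
  exact (Set.finite_range _).bddAbove.mono hsub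

end Aux

theorem SL_GH_stable (X Y : Type) [Fintype X] [Fintype Y] [Nonempty X] [Nonempty Y]
    (dX : X → X → ℝ) (dY : Y → Y → ℝ) (hX : IsMetric dX) (hY : IsMetric dY) :
    ghDist (uSL dX) (uSL dY) ≤ ghDist dX dY := by
  obtain ⟨hXnn, hXeq, hXsymm, hXtri⟩ := hX
  obtain ⟨hYnn, hYeq, hYsymm, hYtri⟩ := hY
  have hdXX : ∀ x, dX x x = 0 := fun x => (hXeq x x).2 rfl
  have hdYY : ∀ y, dY y y = 0 := fun y => (hYeq y y).2 rfl
  -- main claim: for each correspondence R, distortion uSL ≤ distortion d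
  have main : ∀ R : Set (X × Y), IsCorrespondence R →
      distortion (uSL dX) (uSL dY) R ≤ distortion dX dY R := by
    intro R hR
    set ε := distortion dX dY R with hεdef
    obtain ⟨b0, hb0⟩ := hR.1 (Classical.arbitrary X)
    have hbdd := distortion_bddAbove_set dX dY R
    have hεbound : ∀ p ∈ R, ∀ q ∈ R, |dX p.1 q.1 - dY p.2 q.2| ≤ ε := by
      intro p hp q hq
      exact le_csSup hbdd ⟨p, hp, q, hq, rfl⟩
    have hεnn : 0 ≤ ε :=
      le_trans (abs_nonneg _) (hεbound _ hb0 _ hb0)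
    have hYle : ∀ a b a' b', (a, b) ∈ R → (a', b') ∈ R → dY b b' ≤ dX a a' + ε := by
      intro a b a' b' h1 h2
      have := abs_le.1 (hεbound (a, b) h1 (a', b') h2)
      dsimp only at this
      linarith [this.1]
    have hRswap : ∀ c : Y, ∃ d, (c, d) ∈ Prod.swap '' R := by
      intro c
      obtain ⟨a1, ha1⟩ := hR.2 c
      exact ⟨a1, ⟨(a1, c), ha1, rfl⟩⟩
    have hXle : ∀ (c : Y) (d : X) (c' : Y) (d' : X),
        (c, d) ∈ Prod.swap '' R → (c', d') ∈ Prod.swap '' R →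
        dX d d' ≤ dY c c' + ε := by
      rintro c d c' d' ⟨⟨a1, b1⟩, h1, heq1⟩ ⟨⟨a2, b2⟩, h2, heq2⟩
      simp only [Prod.swap_prod_mk, Prod.mk.injEq] at heq1 heq2
      obtain ⟨rfl, rfl⟩ := heq1
      obtain ⟨rfl, rfl⟩ := heq2
      have := abs_le.1 (hεbound (a1, b1) h1 (a2, b2) h2)
      dsimp only at this
      linarith [this.2]
    refine csSup_le ⟨_, ⟨_, hb0, _, hb0, rfl⟩⟩ ?_
    rintro v ⟨⟨a, b⟩, hp, ⟨a', b'⟩, hq, rfl⟩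
    dsimp only
    rw [abs_le]
    constructor
    · -- -ε ≤ uSL dX a a' - uSL dY b b', i.e. uSL dY ≤ uSL dX + ε
      have := uSL_le_of_corr dX dY R hR.1 ε hXnn hdXX hYle hεnn hp hq
      linarith
    · -- uSL dX a a' - uSL dY b b' ≤ ε, i.e. uSL dX ≤ uSL dY + ε
      have := uSL_le_of_corr dY dX (Prod.swap '' R) hRswap ε hYnn hdYY hXle hεnn
        (a := b) (a' := b') (b := a) (b' := a') ⟨(a, b), hp, rfl⟩ ⟨(a', b'), hq, rfl⟩
      linarith
  -- now compare the infima
  unfold ghDist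
  have h12 : (0:ℝ) ≤ 1/2 := by norm_num
  apply mul_le_mul_of_nonneg_left _ h12
  apply le_csInf
  · refine ⟨distortion dX dY Set.univ, Set.univ, ⟨fun a => ⟨Classical.arbitrary Y, trivial⟩,
      fun b => ⟨Classical.arbitrary X, trivial⟩⟩, rfl⟩
  · rintro v ⟨R, hRcorr, rfl⟩
    have hmem : distortion (uSL dX) (uSL dY) R ∈
        {v : ℝ | ∃ R : Set (X × Y), IsCorrespondence R ∧ v = distortion (uSL dX) (uSL dY) R} :=
      ⟨R, hRcorr, rfl⟩
    have hbdd : BddBelow {v : ℝ | ∃ R : Set (X × Y), IsCorrespondence R ∧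
        v = distortion (uSL dX) (uSL dY) R} := by
      refine ⟨0, ?_⟩
      rintro w ⟨S, hS, rfl⟩
      obtain ⟨b1, hb1⟩ := hS.1 (Classical.arbitrary X)
      exact le_trans (abs_nonneg _)
        (le_csSup (distortion_bddAbove_set _ _ S) ⟨_, hb1, _, hb1, rfl⟩)
    exact le_trans (csInf_le hbdd hmem) (main R hRcorr)
end
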